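/- Let f : ℂ → ℂ be square integrable with respect to the Gaussian measure dμ(w) = (1/π) exp(−|w|²) dA(w). Then the Berezin transform B(f) is continuously differentiable on ℂ (as a function of the real coordinates), and for every z ∈ ℂ: (∂/∂z) B(f)(z) = B(conj(w)·f)(z) − conj(z)·B(f)(z), and (∂/∂conj(z)) B(f)(z) = B(w·f)(z) − z·B(f)(z), where B(conj(w)·f)(z) = (1/π)∫_ℂ exp(−|z−w|²)·conj(w)·f(w) dA(w) and B(w·f)(z) = (1/π)∫_ℂ exp(−|z−w|²)·w·f(w) dA(w) (both integrals converge absolutely). -/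

import Mathlib

open Complex ComplexConjugate MeasureTheory

/-- The Gaussian measure `dμ(w) = (1/π)·exp(−|w|²) dA(w)` on `ℂ`. -/
noncomputable def gaussianMeasure : Measure ℂ :=
  volume.withDensity fun w => ENNReal.ofReal (Real.exp (-‖w‖ ^ 2) / Real.pi)

/-- The Berezin transform `B(f)(z) = (1/π)∫_ℂ exp(−|z−w|²) f(w) dA(w)`. -/
noncomputable def berezin (f : ℂ → ℂ) (z : ℂ) : ℂ :=
  (1 / (Real.pi : ℂ)) * ∫ w : ℂ, Complex.exp (-((‖z - w‖ : ℂ) ^ 2)) * f w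

/-- The Wirtinger derivative `∂f/∂z = (1/2)(∂f/∂x − i·∂f/∂y)` of `f : ℂ → ℂ`. -/
noncomputable def wirtingerDeriv (f : ℂ → ℂ) (z : ℂ) : ℂ :=
  (fderiv ℝ f z 1 - Complex.I * fderiv ℝ f z Complex.I) / 2

/-- The conjugate Wirtinger derivative `∂f/∂conj z = (1/2)(∂f/∂x + i·∂f/∂y)`. -/
noncomputable def wirtingerDerivBar (f : ℂ → ℂ) (z : ℂ) : ℂ :=
  (fderiv ℝ f z 1 + Complex.I * fderiv ℝ f z Complex.I) / 2

/-! Differentiate under the integral sign. The real derivative of the kernel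
`exp (-‖z - w‖²)` in `z` is `-2 exp (-‖z - w‖²) ⟪z - w, ·⟫`, whose `∂/∂z` and `∂/∂z̄` components are
`exp (-‖z - w‖²) (w̄ - z̄)` and `exp (-‖z - w‖²) (w - z)`. For `‖z‖ ≤ R` the kernel is at most
`exp (2R‖w‖ - ‖w‖²)`, so every integrand is dominated by `C exp (c‖w‖ - ‖w‖²) ‖f w‖`, the product
of `exp (c‖w‖ - ‖w‖²/2)` and `exp (-‖w‖²/2) ‖f w‖`. Both factors are in `L²(dA)`: the first by
comparison with a Gaussian, the second because `f ∈ L²(μ)`. -/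

section Gaussian

variable {V : Type*} [NormedAddCommGroup V] [InnerProductSpace ℝ V] [FiniteDimensional ℝ V]
  [MeasurableSpace V] [BorelSpace V]

theorem integrable_exp_neg_mul_sq_norm {b : ℝ} (hb : 0 < b) :
    Integrable fun v : V => Real.exp (-b * ‖v‖ ^ 2) := by
  have h := (GaussianFourier.integrable_cexp_neg_mul_sq_norm_add (V := V) (b := b)
    (by simpa using hb) 0 0).re
  refine h.congr (.of_forall fun v => ?_)
  simp only [inner_zero_left, ofReal_zero, mul_zero, add_zero]
  norm_cast

theorem memLp_two_exp_mul_norm_sub_sq (c : ℝ) :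
    MemLp (fun v : V => Real.exp (c * ‖v‖ - ‖v‖ ^ 2 / 2)) 2 := by
  refine (memLp_two_iff_integrable_sq (by fun_prop)).2 <|
    ((integrable_exp_neg_mul_sq_norm one_half_pos).const_mul (Real.exp (2 * c ^ 2))).mono'
      (by fun_prop) (.of_forall fun v => ?_)
  rw [Real.norm_of_nonneg (by positivity), sq, ← Real.exp_add, ← Real.exp_add]
  exact Real.exp_le_exp.2 (by nlinarith [sq_nonneg (‖v‖ - 2 * c)])

end Gaussian

section ParametricIntegral

open Filter Topology

variable {α H E : Type*} [MeasurableSpace α] {μ : Measure α}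
  [NormedAddCommGroup H] [NormedSpace ℝ H] [NormedAddCommGroup E] [NormedSpace ℝ E]

theorem continuous_integral_of_locally_dominated {X : Type*} [TopologicalSpace X]
    [FirstCountableTopology X] {F : X → α → E} (hF_meas : ∀ x, AEStronglyMeasurable (F x) μ)
    (h_bound : ∀ x₀, ∃ s ∈ 𝓝 x₀, ∃ bound : α → ℝ, Integrable bound μ ∧
      ∀ᵐ a ∂μ, ∀ x ∈ s, ‖F x a‖ ≤ bound a)
    (h_cont : ∀ᵐ a ∂μ, Continuous (F · a)) :
    Continuous fun x => ∫ a, F x a ∂μ := by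
  refine continuous_iff_continuousAt.2 fun x₀ => ?_
  obtain ⟨s, hs, bound, h_int, hF_le⟩ := h_bound x₀
  refine continuousAt_of_dominated (.of_forall hF_meas) ?_ h_int
    (h_cont.mono fun a ha => ha.continuousAt)
  filter_upwards [hs] with x hx
  exact hF_le.mono fun a ha => ha x hx

theorem hasFDerivAt_integral_of_locally_dominated {F : H → α → E} {F' : H → α → H →L[ℝ] E}
    (hF_int : ∀ x, Integrable (F x) μ) (hF'_meas : ∀ x, AEStronglyMeasurable (F' x) μ)
    (h_bound : ∀ x₀, ∃ s ∈ 𝓝 x₀, ∃ bound : α → ℝ, Integrable bound μ ∧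
      ∀ᵐ a ∂μ, ∀ x ∈ s, ‖F' x a‖ ≤ bound a)
    (h_diff : ∀ x a, HasFDerivAt (F · a) (F' x a) x) (x₀ : H) :
    HasFDerivAt (fun x => ∫ a, F x a ∂μ) (∫ a, F' x₀ a ∂μ) x₀ := by
  obtain ⟨s, hs, bound, h_int, hF'_le⟩ := h_bound x₀
  exact hasFDerivAt_integral_of_dominated_of_fderiv_le hs
    (.of_forall fun x => (hF_int x).aestronglyMeasurable) (hF_int x₀) (hF'_meas x₀) hF'_le
    h_int (.of_forall fun a x _ => h_diff x a)

end ParametricIntegral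

section Wirtinger

open ContinuousLinearMap

noncomputable def wirtingerCLM : (ℂ →L[ℝ] ℂ) →L[ℝ] ℂ :=
  (2⁻¹ : ℂ) • (apply ℝ ℂ 1 - I • apply ℝ ℂ I)

noncomputable def wirtingerBarCLM : (ℂ →L[ℝ] ℂ) →L[ℝ] ℂ :=
  (2⁻¹ : ℂ) • (apply ℝ ℂ 1 + I • apply ℝ ℂ I)

theorem wirtingerCLM_apply (L : ℂ →L[ℝ] ℂ) : wirtingerCLM L = (L 1 - I * L I) / 2 := by
  simp only [wirtingerCLM, smul_apply, sub_apply, apply_apply, smul_eq_mul]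
  ring

theorem wirtingerBarCLM_apply (L : ℂ →L[ℝ] ℂ) :
    wirtingerBarCLM L = (L 1 + I * L I) / 2 := by
  simp only [wirtingerBarCLM, smul_apply, add_apply, apply_apply, smul_eq_mul]
  ring

theorem wirtingerDeriv_eq_wirtingerCLM (f : ℂ → ℂ) (z : ℂ) :
    wirtingerDeriv f z = wirtingerCLM (fderiv ℝ f z) :=
  (wirtingerCLM_apply _).symm

theorem wirtingerDerivBar_eq_wirtingerBarCLM (f : ℂ → ℂ) (z : ℂ) :
    wirtingerDerivBar f z = wirtingerBarCLM (fderiv ℝ f z) :=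
  (wirtingerBarCLM_apply _).symm

theorem wirtingerCLM_smul (c : ℂ) (L : ℂ →L[ℝ] ℂ) : wirtingerCLM (c • L) = c * wirtingerCLM L := by
  simp only [wirtingerCLM_apply, smul_apply, smul_eq_mul]
  ring

theorem wirtingerBarCLM_smul (c : ℂ) (L : ℂ →L[ℝ] ℂ) :
    wirtingerBarCLM (c • L) = c * wirtingerBarCLM L := by
  simp only [wirtingerBarCLM_apply, smul_apply, smul_eq_mul]
  ring

theorem wirtingerCLM_ofReal_comp_innerSL (a : ℂ) :
    wirtingerCLM (ofRealCLM.comp (innerSL ℝ a)) = conj a / 2 := by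
  apply Complex.ext <;> simp [wirtingerCLM_apply]

theorem wirtingerBarCLM_ofReal_comp_innerSL (a : ℂ) :
    wirtingerBarCLM (ofRealCLM.comp (innerSL ℝ a)) = a / 2 := by
  apply Complex.ext <;> simp [wirtingerBarCLM_apply]

end Wirtinger

section GaussianMeasure

variable {f : ℂ → ℂ}

theorem measurable_gaussianDensity :
    Measurable fun w : ℂ => ENNReal.ofReal (Real.exp (-‖w‖ ^ 2) / Real.pi) := by
  fun_prop

theorem volume_absolutelyContinuous_gaussianMeasure : volume ≪ gaussianMeasure :=
  withDensity_absolutelyContinuous' measurable_gaussianDensity.aemeasurable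
    (.of_forall fun w => by positivity)

theorem memLp_two_exp_mul_norm_of_memLp_gaussianMeasure (hf : MemLp f 2 gaussianMeasure) :
    MemLp (fun w => Real.exp (-‖w‖ ^ 2 / 2) * ‖f w‖) 2 volume := by
  have hf_meas := hf.1.mono_ac volume_absolutelyContinuous_gaussianMeasure
  refine (memLp_two_iff_integrable_sq (by fun_prop)).2 ?_
  have h := hf.integrable_norm_pow two_ne_zero
  rw [gaussianMeasure, integrable_withDensity_iff measurable_gaussianDensity
    (.of_forall fun _ => ENNReal.ofReal_lt_top)] at h
  refine (h.const_mul Real.pi).congr (.of_forall fun w => ?_)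
  dsimp only
  rw [ENNReal.toReal_ofReal (by positivity), mul_pow, ← Real.exp_nat_mul]
  field_simp
  ring_nf

theorem integrable_exp_mul_norm_sub_sq_mul_norm (hf : MemLp f 2 gaussianMeasure) (c : ℝ) :
    Integrable fun w => Real.exp (c * ‖w‖ - ‖w‖ ^ 2) * ‖f w‖ := by
  have h := (memLp_two_exp_mul_norm_of_memLp_gaussianMeasure hf).mul
    (memLp_two_exp_mul_norm_sub_sq c) (r := 1)
  refine (memLp_one_iff_integrable.1 h).congr (.of_forall fun w => ?_)
  simp only [Pi.mul_apply]
  rw [← mul_assoc, ← Real.exp_add]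
  ring_nf

end GaussianMeasure

noncomputable def berezinKernel (z w : ℂ) : ℂ :=
  Complex.exp (-((‖z - w‖ : ℂ) ^ 2))

theorem berezin_eq_integral_berezinKernel (f : ℂ → ℂ) (z : ℂ) :
    berezin f z = (1 / (Real.pi : ℂ)) * ∫ w, berezinKernel z w * f w :=
  rfl

theorem berezinKernel_eq_ofReal (z w : ℂ) :
    berezinKernel z w = (Real.exp (-‖z - w‖ ^ 2) : ℂ) := by
  simp [berezinKernel]

theorem norm_berezinKernel (z w : ℂ) : ‖berezinKernel z w‖ = Real.exp (-‖z - w‖ ^ 2) := by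
  rw [berezinKernel_eq_ofReal, Complex.norm_real, Real.norm_of_nonneg (by positivity)]

theorem continuous_berezinKernel_right (z : ℂ) : Continuous (berezinKernel z) := by
  unfold berezinKernel; fun_prop

noncomputable def berezinKernelFDeriv (z w : ℂ) : ℂ →L[ℝ] ℂ :=
  (-2 * berezinKernel z w) • ofRealCLM.comp (innerSL ℝ (z - w))

theorem hasFDerivAt_berezinKernel (z w : ℂ) :
    HasFDerivAt (berezinKernel · w) (berezinKernelFDeriv z w) z := by
  have h := ofRealCLM.hasFDerivAt.comp z (hasFDerivAt_sub_const w).norm_sq.neg.exp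
  rw [show (berezinKernel · w) = ofRealCLM ∘ fun z => Real.exp (-‖z - w‖ ^ 2) from
    funext (berezinKernel_eq_ofReal · w)]
  refine h.congr_fderiv ?_
  ext v
  simp only [berezinKernelFDeriv, berezinKernel_eq_ofReal, ContinuousLinearMap.comp_apply,
    ContinuousLinearMap.id_apply, smul_apply, neg_apply, coe_innerSL_apply, ofRealCLM_apply,
    Pi.neg_apply, smul_eq_mul, nsmul_eq_mul]
  push_cast
  ring

open ContinuousLinearMap in
theorem norm_berezinKernelFDeriv_le (z w : ℂ) :
    ‖berezinKernelFDeriv z w‖ ≤ 2 * ‖z - w‖ * Real.exp (-‖z - w‖ ^ 2) := by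
  calc ‖berezinKernelFDeriv z w‖
      ≤ ‖-2 * berezinKernel z w‖ * (‖(ofRealCLM : ℝ →L[ℝ] ℂ)‖ * ‖innerSL ℝ (z - w)‖) :=
        (opNorm_smul_le _ _).trans (by gcongr; exact opNorm_comp_le _ _)
    _ = 2 * ‖z - w‖ * Real.exp (-‖z - w‖ ^ 2) := by
        rw [norm_mul, norm_berezinKernel, ofRealCLM_norm, innerSL_apply_norm]
        norm_num
        ring

theorem continuous_berezinKernelFDeriv_left (w : ℂ) : Continuous (berezinKernelFDeriv · w) := by
  unfold berezinKernelFDeriv berezinKernel; fun_prop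

theorem continuous_berezinKernelFDeriv_right (z : ℂ) : Continuous (berezinKernelFDeriv z) := by
  unfold berezinKernelFDeriv berezinKernel; fun_prop

theorem wirtingerCLM_berezinKernelFDeriv (z w : ℂ) :
    wirtingerCLM (berezinKernelFDeriv z w) = berezinKernel z w * (conj w - conj z) := by
  rw [berezinKernelFDeriv, wirtingerCLM_smul, wirtingerCLM_ofReal_comp_innerSL, map_sub]
  ring

theorem wirtingerBarCLM_berezinKernelFDeriv (z w : ℂ) :
    wirtingerBarCLM (berezinKernelFDeriv z w) = berezinKernel z w * (w - z) := by
  rw [berezinKernelFDeriv, wirtingerBarCLM_smul, wirtingerBarCLM_ofReal_comp_innerSL]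
  ring

section Bounds

variable {z w : ℂ} {R : ℝ}

theorem neg_norm_sub_sq_le (hz : ‖z‖ ≤ R) : -‖z - w‖ ^ 2 ≤ 2 * R * ‖w‖ - ‖w‖ ^ 2 := by
  have h : ‖w‖ ≤ R + ‖z - w‖ := by
    simpa using (norm_sub_le z (z - w)).trans (by gcongr)
  nlinarith [norm_nonneg w, norm_nonneg (z - w), sq_nonneg (‖w‖ - ‖z - w‖)]

theorem one_add_norm_mul_exp_neg_norm_sub_sq_le (hz : ‖z‖ ≤ R) :
    (1 + ‖w‖) * Real.exp (-‖z - w‖ ^ 2) ≤ Real.exp ((2 * R + 1) * ‖w‖ - ‖w‖ ^ 2) := by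
  calc (1 + ‖w‖) * Real.exp (-‖z - w‖ ^ 2)
      ≤ Real.exp ‖w‖ * Real.exp (2 * R * ‖w‖ - ‖w‖ ^ 2) := by
        gcongr
        · linarith [Real.add_one_le_exp ‖w‖]
        · exact neg_norm_sub_sq_le hz
    _ = Real.exp ((2 * R + 1) * ‖w‖ - ‖w‖ ^ 2) := by rw [← Real.exp_add]; ring_nf

theorem norm_sub_le_mul_one_add_norm (hz : ‖z‖ ≤ R) : ‖z - w‖ ≤ (1 + R) * (1 + ‖w‖) := by
  have hR : 0 ≤ R := (norm_nonneg z).trans hz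
  nlinarith [norm_sub_le z w, norm_nonneg w]

end Bounds

section Berezin

open Filter Topology

variable {f : ℂ → ℂ}

theorem integrable_berezinKernel_mul_mul (hf : MemLp f 2 gaussianMeasure) (z : ℂ) {g : ℂ → ℂ}
    (hg_meas : AEStronglyMeasurable g) (hg : ∀ w, ‖g w‖ ≤ 1 + ‖w‖) :
    Integrable fun w => berezinKernel z w * (g w * f w) := by
  have hf_meas := hf.1.mono_ac volume_absolutelyContinuous_gaussianMeasure
  refine (integrable_exp_mul_norm_sub_sq_mul_norm hf (2 * ‖z‖ + 1)).mono'
    ((continuous_berezinKernel_right z).aestronglyMeasurable.mul (hg_meas.mul hf_meas))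
    (.of_forall fun w => ?_)
  calc ‖berezinKernel z w * (g w * f w)‖
      ≤ (1 + ‖w‖) * Real.exp (-‖z - w‖ ^ 2) * ‖f w‖ := by
        rw [norm_mul, norm_mul, norm_berezinKernel, mul_comm (1 + ‖w‖), mul_assoc]
        gcongr
        exact hg w
    _ ≤ Real.exp ((2 * ‖z‖ + 1) * ‖w‖ - ‖w‖ ^ 2) * ‖f w‖ := by
        gcongr
        exact one_add_norm_mul_exp_neg_norm_sub_sq_le le_rfl

theorem integrable_berezinKernel_mul (hf : MemLp f 2 gaussianMeasure) (z : ℂ) :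
    Integrable fun w => berezinKernel z w * f w := by
  simpa using integrable_berezinKernel_mul_mul hf z (g := 1) aestronglyMeasurable_const
    (fun w => by simp)

theorem norm_smul_berezinKernelFDeriv_le {z : ℂ} {R : ℝ} (hz : ‖z‖ ≤ R) (c w : ℂ) :
    ‖c • berezinKernelFDeriv z w‖
      ≤ 2 * (1 + R) * (Real.exp ((2 * R + 1) * ‖w‖ - ‖w‖ ^ 2) * ‖c‖) := by
  have hR : 0 ≤ R := (norm_nonneg z).trans hz
  calc ‖c • berezinKernelFDeriv z w‖
      ≤ ‖c‖ * (2 * ((1 + R) * (1 + ‖w‖)) * Real.exp (-‖z - w‖ ^ 2)) := by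
        rw [norm_smul]
        gcongr
        exact (norm_berezinKernelFDeriv_le z w).trans
          (by gcongr; exact norm_sub_le_mul_one_add_norm hz)
    _ = 2 * (1 + R) * ((1 + ‖w‖) * Real.exp (-‖z - w‖ ^ 2) * ‖c‖) := by ring
    _ ≤ _ := by gcongr; exact one_add_norm_mul_exp_neg_norm_sub_sq_le hz

theorem exists_integrable_bound_berezinKernelFDeriv (hf : MemLp f 2 gaussianMeasure) (z₀ : ℂ) :
    ∃ s ∈ 𝓝 z₀, ∃ bound : ℂ → ℝ, Integrable bound ∧
      ∀ᵐ w, ∀ z ∈ s, ‖f w • berezinKernelFDeriv z w‖ ≤ bound w := by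
  set R := ‖z₀‖ + 1
  refine ⟨Metric.ball 0 R, Metric.isOpen_ball.mem_nhds (by simp [R]), _,
    (integrable_exp_mul_norm_sub_sq_mul_norm hf (2 * R + 1)).const_mul (2 * (1 + R)),
    .of_forall fun w z hz => norm_smul_berezinKernelFDeriv_le ?_ (f w) w⟩
  exact (mem_ball_zero_iff.1 hz).le

theorem aestronglyMeasurable_smul_berezinKernelFDeriv (hf : MemLp f 2 gaussianMeasure) (z : ℂ) :
    AEStronglyMeasurable fun w => f w • berezinKernelFDeriv z w :=
  (hf.1.mono_ac volume_absolutelyContinuous_gaussianMeasure).smul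
    (continuous_berezinKernelFDeriv_right z).aestronglyMeasurable

theorem hasFDerivAt_berezin (hf : MemLp f 2 gaussianMeasure) (z : ℂ) :
    HasFDerivAt (berezin f) ((1 / (Real.pi : ℂ)) • ∫ w, f w • berezinKernelFDeriv z w) z :=
  (hasFDerivAt_integral_of_locally_dominated (integrable_berezinKernel_mul hf)
    (aestronglyMeasurable_smul_berezinKernelFDeriv hf)
    (exists_integrable_bound_berezinKernelFDeriv hf)
    (fun z w => (hasFDerivAt_berezinKernel z w).mul_const (f w)) z).const_mul _

theorem contDiff_berezin (hf : MemLp f 2 gaussianMeasure) : ContDiff ℝ 1 (berezin f) := by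
  refine contDiff_one_iff_hasFDerivAt.2 ⟨_, ?_, hasFDerivAt_berezin hf⟩
  exact (continuous_integral_of_locally_dominated
    (aestronglyMeasurable_smul_berezinKernelFDeriv hf)
    (exists_integrable_bound_berezinKernelFDeriv hf)
    (.of_forall fun w => (continuous_berezinKernelFDeriv_left w).const_smul (f w))).const_smul
      (1 / (Real.pi : ℂ))

theorem integrable_berezinKernel_mul_conj_mul (hf : MemLp f 2 gaussianMeasure) (z : ℂ) :
    Integrable fun w => berezinKernel z w * (conj w * f w) :=
  integrable_berezinKernel_mul_mul hf z continuous_conj.aestronglyMeasurable fun w => by simp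

theorem integrable_berezinKernel_mul_self_mul (hf : MemLp f 2 gaussianMeasure) (z : ℂ) :
    Integrable fun w => berezinKernel z w * (w * f w) :=
  integrable_berezinKernel_mul_mul hf z aestronglyMeasurable_id fun w => by simp

theorem integrable_smul_berezinKernelFDeriv (hf : MemLp f 2 gaussianMeasure) (z : ℂ) :
    Integrable fun w => f w • berezinKernelFDeriv z w :=
  ((integrable_exp_mul_norm_sub_sq_mul_norm hf (2 * ‖z‖ + 1)).const_mul _).mono'
    (aestronglyMeasurable_smul_berezinKernelFDeriv hf z)
    (.of_forall fun w => norm_smul_berezinKernelFDeriv_le le_rfl (f w) w)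

theorem wirtingerDeriv_berezin_eq (hf : MemLp f 2 gaussianMeasure) (z : ℂ) :
    wirtingerDeriv (berezin f) z = berezin (fun w => conj w * f w) z - conj z * berezin f z := by
  rw [wirtingerDeriv_eq_wirtingerCLM, (hasFDerivAt_berezin hf z).fderiv, wirtingerCLM_smul,
    ← ContinuousLinearMap.integral_comp_comm _ (integrable_smul_berezinKernelFDeriv hf z)]
  have h : ∀ w, wirtingerCLM (f w • berezinKernelFDeriv z w)
      = berezinKernel z w * (conj w * f w) - conj z * (berezinKernel z w * f w) := fun w => by
    rw [wirtingerCLM_smul, wirtingerCLM_berezinKernelFDeriv]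
    ring
  simp only [h, integral_sub (integrable_berezinKernel_mul_conj_mul hf z)
    ((integrable_berezinKernel_mul hf z).const_mul _), integral_const_mul,
    berezin_eq_integral_berezinKernel]
  ring

theorem wirtingerDerivBar_berezin_eq (hf : MemLp f 2 gaussianMeasure) (z : ℂ) :
    wirtingerDerivBar (berezin f) z = berezin (fun w => w * f w) z - z * berezin f z := by
  rw [wirtingerDerivBar_eq_wirtingerBarCLM, (hasFDerivAt_berezin hf z).fderiv,
    wirtingerBarCLM_smul,
    ← ContinuousLinearMap.integral_comp_comm _ (integrable_smul_berezinKernelFDeriv hf z)]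
  have h : ∀ w, wirtingerBarCLM (f w • berezinKernelFDeriv z w)
      = berezinKernel z w * (w * f w) - z * (berezinKernel z w * f w) := fun w => by
    rw [wirtingerBarCLM_smul, wirtingerBarCLM_berezinKernelFDeriv]
    ring
  simp only [h, integral_sub (integrable_berezinKernel_mul_self_mul hf z)
    ((integrable_berezinKernel_mul hf z).const_mul _), integral_const_mul,
    berezin_eq_integral_berezinKernel]
  ring

end Berezin

/-- If `f : ℂ → ℂ` is square integrable for the Gaussian measure, then `B(f)` is
continuously differentiable (in the real coordinates), for every `z` the integrals
defining `B(conj w·f)(z)` and `B(w·f)(z)` converge absolutely, and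
`∂/∂z B(f)(z) = B(conj w·f)(z) − conj z·B(f)(z)` and
`∂/∂conj z B(f)(z) = B(w·f)(z) − z·B(f)(z)`. -/
theorem wirtingerDeriv_berezin (f : ℂ → ℂ) (hf : MemLp f 2 gaussianMeasure) :
    ContDiff ℝ 1 (berezin f) ∧
    (∀ z : ℂ,
      Integrable
        (fun w : ℂ => Complex.exp (-((‖z - w‖ : ℂ) ^ 2)) * (conj w * f w)) volume ∧
      Integrable
        (fun w : ℂ => Complex.exp (-((‖z - w‖ : ℂ) ^ 2)) * (w * f w)) volume) ∧
    (∀ z : ℂ,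
      wirtingerDeriv (berezin f) z
          = berezin (fun w => conj w * f w) z - conj z * berezin f z ∧
      wirtingerDerivBar (berezin f) z
          = berezin (fun w => w * f w) z - z * berezin f z) :=
  ⟨contDiff_berezin hf,
    fun z => ⟨integrable_berezinKernel_mul_conj_mul hf z,
      integrable_berezinKernel_mul_self_mul hf z⟩,
    fun z => ⟨wirtingerDeriv_berezin_eq hf z, wirtingerDerivBar_berezin_eq hf z⟩⟩
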